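/- Let n ≥ 2, 1 ≤ p ≤ n, let g be an integer with 0 ≤ g ≤ (p−1)/2, and let ℓ be an integer with max(0, n+1+2g−p) ≤ ℓ ≤ n−1. Then C_{p,g}^{(ℓ)} = 0. (This is part of Claim 3.8 in the proof of Theorem 2.2.) -/

import Mathlib

noncomputable section

open Finset PowerSeries

/-- Binomial coefficient `binom b a` with integer arguments,
zero when `a < 0` or `b < a`. -/
def ibinom (b a : ℤ) : ℤ := if a < 0 ∨ b < a then 0 else (b.toNat.choose a.toNat : ℤ)

/-- One-norm `‖μ‖` of an integer vector. -/
def onenorm {n : ℕ} (μ : Fin n → ℤ) : ℕ := ∑ i, (μ i).natAbs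

/-- `Z(μ)`: number of zero coordinates. -/
def zcount {n : ℕ} (μ : Fin n → ℤ) : ℕ := (univ.filter fun i => μ i = 0).card

/-- `N_𝓛(k, ℓ)`. -/
def Ncard {n : ℕ} (L : Set (Fin n → ℤ)) (k ℓ : ℕ) : ℕ :=
  {μ : Fin n → ℤ | μ ∈ L ∧ onenorm μ = k ∧ zcount μ = ℓ}.ncard

/-- `N_𝓛(k)`. -/
def NcardTot {n : ℕ} (L : Set (Fin n → ℤ)) (k : ℕ) : ℕ :=
  {μ : Fin n → ℤ | μ ∈ L ∧ onenorm μ = k}.ncard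

/-- `ϑ_𝓛^{(ℓ)}(z) = Σ_{k≥0} N_𝓛(k,ℓ) z^k`. -/
def thetaL {n : ℕ} (L : Set (Fin n → ℤ)) (ℓ : ℕ) : PowerSeries ℤ :=
  PowerSeries.mk fun k => (Ncard L k ℓ : ℤ)

/-- `ϑ_𝓛(z) = Σ_{k≥0} N_𝓛(k) z^k`. -/
def thetaTot {n : ℕ} (L : Set (Fin n → ℤ)) : PowerSeries ℤ :=
  PowerSeries.mk fun k => (NcardTot L k : ℤ)

/-- `N_𝓛^red(k,ℓ)`, counting elements of `C(q) ∩ 𝓛`. -/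
def NcardRed {n : ℕ} (L : Set (Fin n → ℤ)) (q k ℓ : ℕ) : ℕ :=
  {μ : Fin n → ℤ | (∀ i, |μ i| < (q : ℤ)) ∧ μ ∈ L ∧ onenorm μ = k ∧ zcount μ = ℓ}.ncard

/-- `Φ_𝓛^{(ℓ)}(z) = Σ_{k≥0} N_𝓛^red(k,ℓ) z^k`. -/
def PhiL {n : ℕ} (L : Set (Fin n → ℤ)) (q ℓ : ℕ) : PowerSeries ℤ :=
  PowerSeries.mk fun k => (NcardRed L q k ℓ : ℤ)

/-- `𝓛` is `q`-periodic: `μ ∈ 𝓛 ↔ μ + qν ∈ 𝓛`. -/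
def qPeriodic {n : ℕ} (q : ℕ) (L : Set (Fin n → ℤ)) : Prop :=
  ∀ μ ν : Fin n → ℤ, μ ∈ L ↔ (μ + (q : ℤ) • ν) ∈ L

/-- `M_𝓛(k,p)`. -/
def Mcoef {n : ℕ} (L : Set (Fin n → ℤ)) (k p : ℕ) : ℤ :=
  ∑ ℓ ∈ range (n+1), ∑ r ∈ range ((k-1+p)/2 + 1),
    (Ncard L (k-1+p-2*r) ℓ : ℤ) *
    ∑ j ∈ Icc 1 p, (-1 : ℤ)^(j-1) *
      ∑ t ∈ range ((p-j)/2 + 1), ibinom ((n : ℤ) - p + j + 2*t) t *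
        ∑ β ∈ range (p-j-2*t+1),
          2^(p-j-2*t-β) * ibinom ((n : ℤ) - ℓ) β * ibinom (ℓ : ℤ) ((p-j-2*t-β : ℕ)) *
          ∑ α ∈ range (β+1), ibinom (β : ℤ) α *
            ∑ i ∈ range j, ibinom ((r : ℤ) - i - p + j + α + t + n - 2) ((n : ℤ) - 2)

/-- `Ã_p^{(ℓ)}(z) = z^p A_p^{(ℓ)}(z)`. -/
def Atilde (n p ℓ : ℕ) : PowerSeries ℤ :=
  ∑ j ∈ Icc 1 p, C (R := ℤ) ((-1 : ℤ)^(j-1)) *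
    ∑ t ∈ range ((p-j)/2 + 1), C (R := ℤ) (ibinom ((n : ℤ) - p + j + 2*t) t) *
      ∑ β ∈ range (p-j-2*t+1),
        C (R := ℤ) (2^(p-j-2*t-β) * ibinom ((n : ℤ) - ℓ) β * ibinom (ℓ : ℤ) ((p-j-2*t-β : ℕ))) *
        ∑ α ∈ range (β+1), C (R := ℤ) (ibinom (β : ℤ) α) *
          ∑ i ∈ range j, (X : PowerSeries ℤ)^(2*p - 2*(j+t+α-i))

/-- `Υ_m^{(ℓ)}(z)`; zero when `m < 0`. -/
def Upsilon {n : ℕ} (L : Set (Fin n → ℤ)) (m : ℤ) (ℓ : ℕ) : PowerSeries ℤ :=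
  if m < 0 then 0 else
    ∑ h ∈ range (m.toNat + 1),
      C (R := ℤ) (∑ s ∈ range (h/2 + 1), (Ncard L (h - 2*s) ℓ : ℤ) * ((s + n - 2).choose (n-2) : ℤ)) *
        (X : PowerSeries ℤ)^h

/-- `B̃_{𝓛,p}^{(ℓ)}(z) = z^p B_{𝓛,p}^{(ℓ)}(z)`. -/
def Btilde {n : ℕ} (L : Set (Fin n → ℤ)) (p ℓ : ℕ) : PowerSeries ℤ :=
  ∑ j ∈ Icc 1 p, C (R := ℤ) ((-1 : ℤ)^(j-1)) *
    ∑ t ∈ range ((p-j)/2 + 1), C (R := ℤ) (ibinom ((n : ℤ) - p + j + 2*t) t) *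
      ∑ β ∈ range (p-j-2*t+1),
        C (R := ℤ) (2^(p-j-2*t-β) * ibinom ((n : ℤ) - ℓ) β * ibinom (ℓ : ℤ) ((p-j-2*t-β : ℕ))) *
        ∑ α ∈ range (β+1), C (R := ℤ) (ibinom (β : ℤ) α) *
          ∑ i ∈ range j,
            (X : PowerSeries ℤ)^(2*p - 2*(j+t+α-i)) *
              Upsilon L (2*((j : ℤ) + t + α - i) - p - 1) ℓ

/-- `C_{p,g}^{(ℓ)}`. -/
def Cpg (n p g ℓ : ℕ) : ℤ :=
  ∑ j ∈ Icc 1 p, (-1 : ℤ)^(j-1) *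
    ∑ t ∈ range ((p-j)/2 + 1), ibinom ((n : ℤ) - p + j + 2*t) t *
      ∑ β ∈ range (p-j-2*t+1),
        2^(p-j-2*t-β) * ibinom ((n : ℤ) - ℓ) β * ibinom (ℓ : ℤ) ((p-j-2*t-β : ℕ)) *
        ∑ i ∈ range j, ibinom (β : ℤ) ((p : ℤ) + i - j - t - g)

/-!
After the substitution `s = p - j - 2t`, `c = s - β`, the factor `binom(β, p+i-j-t-g)` is the
coefficient of `x^g` in `x^(t+i+c) (1+x)^β`, so a term can be nonzero only if `t + i + c ≤ g`.
Together with `β ≤ n - ℓ` and `n + 1 + 2g ≤ ℓ + p` this gives `β + c + 2t + i < p`, so the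
dependent ranges of the sum may be replaced by the box `c ≤ ℓ`, `i < p`, `β ≤ n - ℓ`, `t ≤ g`.
There Vandermonde's identity sums out `t` and leaves a factor independent of `β`, and the
alternating sum `Σ_β (-1)^β binom(n-ℓ, β)` vanishes because `n - ℓ ≥ 1`.
-/

lemma ibinom_natCast (b c : ℕ) : ibinom b c = b.choose c := by
  unfold ibinom
  split_ifs with h
  · rcases h with h | h
    · omega
    · rw [Nat.choose_eq_zero_of_lt (by exact_mod_cast h), Nat.cast_zero]
  · simp

lemma ibinom_eq_coeff_X_pow_mul_one_add_X_pow {β E g : ℕ} {m : ℤ} (hm : m = E + β - g) :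
    ibinom β m = (Polynomial.X ^ E * (1 + Polynomial.X) ^ β : Polynomial ℤ).coeff g := by
  rw [Polynomial.coeff_X_pow_mul', Polynomial.coeff_one_add_X_pow]
  split_ifs with hE
  · obtain hg | hg := le_or_gt (g - E) β
    · rw [show m = ((β - (g - E) : ℕ) : ℤ) by omega, ibinom_natCast, Nat.choose_symm hg]
    · rw [Nat.choose_eq_zero_of_lt hg, ibinom, if_pos (Or.inl (by omega)), Nat.cast_zero]
  · rw [ibinom, if_pos (Or.inr (by omega))]

lemma sum_choose_mul_coeff_X_pow_mul_one_add_X_pow (K β E g : ℕ) :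
    ∑ t ∈ range (g + 1), (K.choose t : ℤ) *
        (Polynomial.X ^ (t + E) * (1 + Polynomial.X) ^ β : Polynomial ℤ).coeff g =
      (Polynomial.X ^ E * (1 + Polynomial.X) ^ (β + K) : Polynomial ℤ).coeff g := by
  set q : Polynomial ℤ := Polynomial.X ^ E * (1 + Polynomial.X) ^ β
  rw [show (Polynomial.X ^ E * (1 + Polynomial.X) ^ (β + K) : Polynomial ℤ) =
      (1 + Polynomial.X) ^ K * q by ring, Polynomial.coeff_mul,
    Nat.sum_antidiagonal_eq_sum_range_succ
      (fun u v => ((1 + Polynomial.X : Polynomial ℤ) ^ K).coeff u * q.coeff v)]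
  refine sum_congr rfl fun t ht => ?_
  rw [Polynomial.coeff_one_add_X_pow, pow_add, mul_assoc, Polynomial.coeff_X_pow_mul',
    if_pos (Nat.lt_succ_iff.mp (mem_range.mp ht))]

/-- The summand of `Cpg` at `(j, t, β, i)`, in the coordinates `c = p - j - 2t - β`. -/
def cpgTerm (n ℓ p g c i β t : ℕ) : ℤ :=
  (-1) ^ (p + 1 + c + β) * 2 ^ c * ℓ.choose c * (n - ℓ).choose β * (n - (β + c)).choose t *
    (Polynomial.X ^ (t + i + c) * (1 + Polynomial.X) ^ β : Polynomial ℤ).coeff g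

lemma sum_range_cpgTerm_eq {n ℓ p g c i β : ℕ} (h : β + c ≤ n) :
    ∑ t ∈ range (g + 1), cpgTerm n ℓ p g c i β t =
      (-1) ^ (p + 1 + c) * 2 ^ c * ℓ.choose c *
        (Polynomial.X ^ (i + c) * (1 + Polynomial.X) ^ (n - c) : Polynomial ℤ).coeff g *
        ((-1) ^ β * (n - ℓ).choose β) := by
  have hK : β + (n - (β + c)) = n - c := by omega
  rw [← hK, ← sum_choose_mul_coeff_X_pow_mul_one_add_X_pow, mul_sum, sum_mul]
  refine sum_congr rfl fun t _ => ?_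
  rw [cpgTerm, ← add_assoc]
  ring

lemma le_of_cpgTerm_ne_zero {n ℓ p g c i β t : ℕ} (h : cpgTerm n ℓ p g c i β t ≠ 0) :
    c ≤ ℓ ∧ β ≤ n - ℓ ∧ t + i + c ≤ g := by
  refine ⟨?_, ?_, ?_⟩ <;> by_contra! hlt <;> apply h
  · simp [cpgTerm, Nat.choose_eq_zero_of_lt hlt]
  · simp [cpgTerm, Nat.choose_eq_zero_of_lt hlt]
  · simp [cpgTerm, Polynomial.coeff_X_pow_mul', hlt]

lemma Cpg_summand_eq_cpgTerm {n p g ℓ j t β i : ℕ} (hpn : p ≤ n) (hℓn : ℓ ≤ n) (hj : 1 ≤ j)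
    (hβ : β + 2 * t + j ≤ p) :
    (-1 : ℤ) ^ (j - 1) * (ibinom ((n : ℤ) - p + j + 2 * t) t *
      (2 ^ (p - j - 2 * t - β) * ibinom ((n : ℤ) - ℓ) β * ibinom ℓ ((p - j - 2 * t - β : ℕ)) *
        ibinom β ((p : ℤ) + i - j - t - g))) = cpgTerm n ℓ p g (p - j - 2 * t - β) i β t := by
  set c := p - j - 2 * t - β with hc
  have hsign : (-1 : ℤ) ^ (j - 1) = (-1) ^ (p + 1 + c + β) := by
    rw [neg_one_pow_eq_pow_mod_two, neg_one_pow_eq_pow_mod_two (n := p + 1 + c + β)]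
    congr 1
    omega
  rw [hsign, show (n : ℤ) - p + j + 2 * t = (n - (β + c) : ℕ) by omega,
    show (n : ℤ) - ℓ = (n - ℓ : ℕ) by omega, ibinom_natCast, ibinom_natCast, ibinom_natCast,
    ibinom_eq_coeff_X_pow_mul_one_add_X_pow (E := t + i + c) (g := g) (by omega), cpgTerm]
  ring

lemma Cpg_eq_sum_sigma (n p g ℓ : ℕ) :
    Cpg n p g ℓ = ∑ x ∈ (Icc 1 p).sigma fun j =>
      (range ((p - j) / 2 + 1)).sigma fun t => range (p - j - 2 * t + 1) ×ˢ range j,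
      (-1 : ℤ) ^ (x.1 - 1) * (ibinom ((n : ℤ) - p + x.1 + 2 * x.2.1) x.2.1 *
      (2 ^ (p - x.1 - 2 * x.2.1 - x.2.2.1) * ibinom ((n : ℤ) - ℓ) x.2.2.1 *
        ibinom ℓ ((p - x.1 - 2 * x.2.1 - x.2.2.1 : ℕ)) *
        ibinom x.2.2.1 ((p : ℤ) + x.2.2.2 - x.1 - x.2.1 - g))) := by
  simp only [Cpg, mul_sum, sum_sigma, sum_product]

lemma Cpg_eq_sum_cpgTerm {n p g ℓ : ℕ} (hpn : p ≤ n) (hℓn : ℓ ≤ n)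
    (hp : n + 1 + 2 * g ≤ ℓ + p) :
    Cpg n p g ℓ = ∑ c ∈ range (ℓ + 1), ∑ i ∈ range p, ∑ β ∈ range (n - ℓ + 1),
      ∑ t ∈ range (g + 1), cpgTerm n ℓ p g c i β t := by
  rw [Cpg_eq_sum_sigma]
  simp only [← sum_product']
  refine sum_bij_ne_zero (fun x _ _ => (p - x.1 - 2 * x.2.1 - x.2.2.1, x.2.2.2, x.2.2.1, x.2.1))
    ?_ ?_ ?_ ?_
  · rintro ⟨j, t, β, i⟩ hx hne
    dsimp only at hne ⊢
    simp only [mem_sigma, mem_Icc, mem_range, mem_product] at hx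
    rw [Cpg_summand_eq_cpgTerm hpn hℓn (by omega) (by omega)] at hne
    have := le_of_cpgTerm_ne_zero hne
    simp only [mem_product, mem_range]
    omega
  · rintro ⟨j, t, β, i⟩ hx _ ⟨j', t', β', i'⟩ hx' _ h
    simp only [mem_sigma, mem_Icc, mem_range, mem_product] at hx hx'
    simp only [Prod.mk.injEq] at h
    obtain ⟨rfl, rfl, rfl, rfl⟩ : j = j' ∧ t = t' ∧ β = β' ∧ i = i' := by omega
    rfl
  · rintro ⟨c, i, β, t⟩ hy hne
    dsimp only at hne ⊢
    have := le_of_cpgTerm_ne_zero hne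
    simp only [mem_product, mem_range] at hy
    refine ⟨⟨p - (β + c) - 2 * t, t, β, i⟩, ?_, ?_, ?_⟩
    · simp only [mem_sigma, mem_Icc, mem_range, mem_product]
      omega
    · dsimp only
      rw [Cpg_summand_eq_cpgTerm hpn hℓn (by omega) (by omega),
        show p - (p - (β + c) - 2 * t) - 2 * t - β = c by omega]
      exact hne
    · simp only [Prod.mk.injEq, and_true]
      omega
  · rintro ⟨j, t, β, i⟩ hx _
    dsimp only
    simp only [mem_sigma, mem_Icc, mem_range, mem_product] at hx
    exact Cpg_summand_eq_cpgTerm hpn hℓn (by omega) (by omega)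

lemma sum_cpgTerm_eq_zero {n ℓ p g : ℕ} (hℓ : ℓ < n) :
    ∑ c ∈ range (ℓ + 1), ∑ i ∈ range p, ∑ β ∈ range (n - ℓ + 1),
      ∑ t ∈ range (g + 1), cpgTerm n ℓ p g c i β t = 0 := by
  refine sum_eq_zero fun c hc => sum_eq_zero fun i _ => ?_
  rw [sum_congr rfl fun β hβ => sum_range_cpgTerm_eq (by simp only [mem_range] at hc hβ; omega),
    ← mul_sum, Int.alternating_sum_range_choose, if_neg (by omega), mul_zero]

theorem stmt10_general {n p g ℓ : ℕ} (hpn : p ≤ n)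
    (hg : 2*g + 1 ≤ p) (hℓ1 : n + 1 + 2*g ≤ ℓ + p) (hℓ2 : ℓ ≤ n - 1) :
    Cpg n p g ℓ = 0 := by
  rw [Cpg_eq_sum_cpgTerm hpn (by omega) hℓ1]
  exact sum_cpgTerm_eq_zero (by omega)

/-- part of Claim 3.8: `C_{p,g}^{(ℓ)} = 0` for
`max(0, n+1+2g-p) ≤ ℓ ≤ n-1`. -/
theorem stmt10 {n p g ℓ : ℕ} (hn : 2 ≤ n) (hp1 : 1 ≤ p) (hpn : p ≤ n)
    (hg : 2*g + 1 ≤ p) (hℓ1 : n + 1 + 2*g ≤ ℓ + p) (hℓ2 : ℓ ≤ n - 1) :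
    Cpg n p g ℓ = 0 :=
  stmt10_general hpn hg hℓ1 hℓ2
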